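/- For 1 < p < ∞ and 2/(1+ε) < r < 2 with ε > 0, the function f(z₂) = (z₂−1)^{−r} (principal branch on the slit plane with ½π < arg(z₂−1) < 3π/2) belongs to L^p(△², μ) where μ(z) = |z₂−1|^{r(p−1)}, and the weight μ belongs to A_p*. -/

import Mathlib

open MeasureTheory
open scoped ENNReal NNReal

noncomputable section

/-- The argument of `w` chosen in the branch `(π/2, 3π/2)`-compatible way: the standard
argument shifted by `2π` when negative, so that for `Re w < 0` it lies in `(π/2, 3π/2)`. -/
def branchArg (w : ℂ) : ℝ :=
  if Complex.arg w < 0 then Complex.arg w + 2 * Real.pi else Complex.arg w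

/-- The power `w^s` defined with the branch of the logarithm with argument in
`(π/2, 3π/2)` (for the relevant `w` with `Re w < 0`). -/
def branchCpow (w s : ℂ) : ℂ :=
  Complex.exp (s * (Complex.ofReal (Real.log ‖w‖) + Complex.ofReal (branchArg w) * Complex.I))

/-- The average of `g` over the disc of center `c` and radius `r` in `ℂ`. -/
def discAvg (g : ℂ → ℝ) (c : ℂ) (r : ℝ) : ℝ :=
  (volume (Metric.ball c r)).toReal⁻¹ * ∫ x in Metric.ball c r, g x

/-- The class `A_p^*` on `ℂ²`: each one-variable slice of `μ` satisfies the Muckenhoupt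
`A_p` condition over discs, with a uniform constant. -/
def IsApStar2 (p : ℝ) (μ : ℂ × ℂ → ℝ) : Prop :=
  ∃ C : ℝ,
    (∀ᵐ w₂ : ℂ ∂volume, ∀ (c : ℂ) (r : ℝ), 0 < r →
      discAvg (fun w₁ => μ (w₁, w₂)) c r *
        (discAvg (fun w₁ => μ (w₁, w₂) ^ (1 / (1 - p))) c r) ^ (p - 1) ≤ C) ∧
    (∀ᵐ w₁ : ℂ ∂volume, ∀ (c : ℂ) (r : ℝ), 0 < r →
      discAvg (fun w₂ => μ (w₁, w₂)) c r *
        (discAvg (fun w₂ => μ (w₁, w₂) ^ (1 / (1 - p))) c r) ^ (p - 1) ≤ C)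

/-!
On the bidisc `z₂ ≠ 1`, so there `|f|^p μ = |z₂ - 1|^{-r}`, which is integrable since `r < 2`.
The weight depends on `z₂` alone: its slices in `z₁` are a.e. positive constants, and its slices
in `z₂` are the power weight `|w - 1|^{r(p-1)}`, with dual weight `|w - 1|^{-r}`. On a disc of
radius `ρ` whose centre is at distance `d` from the singularity, the weight averages at most
`(ρ + d)^{r(p-1)}`, and the dual weight at most `C (ρ + d)^{-r}`: far from the singularity
by a pointwise bound, near it by the homogeneity of `|u|^{-r}`. The powers of `ρ + d` cancel in
the `A_p` product.
-/

open Metric Set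

lemma preimage_sub_right_ball_sub (z c : ℂ) (ρ : ℝ) :
    (fun w => w - z) ⁻¹' ball (c - z) ρ = ball c ρ := by
  ext w
  simp [dist_eq_norm]

lemma toReal_volume_ball_complex (c : ℂ) {ρ : ℝ} (hρ : 0 ≤ ρ) :
    (volume (ball c ρ)).toReal = Real.pi * ρ ^ 2 := by
  simp [Complex.volume_ball, ENNReal.toReal_ofReal hρ, mul_comm]

section DiscAverage

variable {g : ℂ → ℝ} {c : ℂ} {ρ : ℝ}

lemma discAvg_const (m : ℝ) (hρ : 0 < ρ) : discAvg (fun _ => m) c ρ = m := by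
  have : (volume (ball c ρ)).toReal ≠ 0 := by
    rw [toReal_volume_ball_complex c hρ.le]; positivity
  rw [discAvg, setIntegral_const, measureReal_def, smul_eq_mul, inv_mul_cancel_left₀ this]

lemma discAvg_nonneg (hg : ∀ w, 0 ≤ g w) : 0 ≤ discAvg g c ρ :=
  mul_nonneg (inv_nonneg.mpr ENNReal.toReal_nonneg) (integral_nonneg hg)

lemma discAvg_le_of_forall_le (hg : ∀ w, 0 ≤ g w) (hρ : 0 < ρ) {M : ℝ}
    (hM : ∀ w ∈ ball c ρ, g w ≤ M) : discAvg g c ρ ≤ M := by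
  calc discAvg g c ρ ≤ discAvg (fun _ => M) c ρ := by
        refine mul_le_mul_of_nonneg_left (integral_mono_of_nonneg (ae_of_all _ hg)
          (integrableOn_const measure_ball_lt_top.ne) ?_) (by positivity)
        exact (ae_restrict_iff' measurableSet_ball).mpr (ae_of_all _ hM)
    _ = M := discAvg_const M hρ

lemma discAvg_comp_sub_right (g : ℂ → ℝ) (z c : ℂ) (ρ : ℝ) :
    discAvg (fun w => g (w - z)) c ρ = discAvg g (c - z) ρ := by
  rw [discAvg, discAvg, ← preimage_sub_right_ball_sub z c ρ,
    (measurePreserving_sub_right volume z).setIntegral_preimage_emb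
      (MeasurableEquiv.subRight z).measurableEmbedding,
    preimage_sub_right_ball_sub, Complex.volume_ball, Complex.volume_ball]

end DiscAverage

lemma setIntegral_ball_zero_norm_rpow (a : ℝ) {R : ℝ} (hR : 0 < R) :
    ∫ u in ball (0 : ℂ) R, ‖u‖ ^ a = R ^ (a + 2) * ∫ u in ball (0 : ℂ) 1, ‖u‖ ^ a := by
  have hscale := Measure.setIntegral_comp_smul_of_pos volume (fun u : ℂ => ‖u‖ ^ a)
    (ball 0 1) hR
  rw [smul_unitBall_of_pos hR, Complex.finrank_real_complex, smul_eq_mul] at hscale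
  have hhom : ∀ u : ℂ, ‖R • u‖ ^ a = R ^ a * ‖u‖ ^ a := fun u => by
    rw [norm_smul, Real.norm_of_nonneg hR.le, Real.mul_rpow hR.le (norm_nonneg u)]
  simp only [hhom, integral_const_mul] at hscale
  rw [eq_inv_mul_iff_mul_eq₀ (by positivity)] at hscale
  rw [Real.rpow_add hR, Real.rpow_two, ← hscale]
  ring

lemma integrableOn_ball_zero_norm_rpow_neg {s : ℝ} (hs : s < 2) (R : ℝ) :
    IntegrableOn (fun u : ℂ => ‖u‖ ^ (-s)) (ball 0 R) :=
  integrableOn_ball_of_norm_le_rpow (C := 1) (by simp) (by simpa using hs)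
    (ae_of_all _ fun u => by simp [Real.norm_of_nonneg (Real.rpow_nonneg (norm_nonneg u) _)])
    (measurable_norm.pow_const _).aestronglyMeasurable

lemma integrableOn_ball_norm_sub_rpow_neg {s : ℝ} (hs : s < 2) (z c : ℂ) (ρ : ℝ) :
    IntegrableOn (fun w : ℂ => ‖w - z‖ ^ (-s)) (ball c ρ) := by
  rw [← preimage_sub_right_ball_sub z c ρ]
  refine ((measurePreserving_sub_right volume z).integrableOn_comp_preimage
    (MeasurableEquiv.subRight z).measurableEmbedding (f := fun u : ℂ => ‖u‖ ^ (-s))).mpr ?_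
  refine (integrableOn_ball_zero_norm_rpow_neg hs (ρ + ‖c - z‖)).mono_set fun u hu => ?_
  rw [mem_ball, dist_eq_norm] at hu
  rw [mem_ball_zero_iff]
  linarith [norm_le_norm_add_norm_sub' u (c - z)]

section PowerWeights

variable {c : ℂ} {ρ s : ℝ}

lemma discAvg_norm_rpow_le {a : ℝ} (ha : 0 ≤ a) (hρ : 0 < ρ) :
    discAvg (fun u => ‖u‖ ^ a) c ρ ≤ (ρ + ‖c‖) ^ a := by
  refine discAvg_le_of_forall_le (fun u => Real.rpow_nonneg (norm_nonneg u) a) hρ fun u hu => ?_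
  rw [mem_ball, dist_eq_norm] at hu
  exact Real.rpow_le_rpow (norm_nonneg u) (by linarith [norm_le_norm_add_norm_sub' u c]) ha

lemma discAvg_norm_rpow_neg_le_of_two_mul_le (hs : 0 ≤ s) (hρ : 0 < ρ) (hc : 2 * ρ ≤ ‖c‖) :
    discAvg (fun u => ‖u‖ ^ (-s)) c ρ ≤ 3 ^ s * (ρ + ‖c‖) ^ (-s) := by
  have hbound : (ρ + ‖c‖) ^ (-s) * 3 ^ s = ((ρ + ‖c‖) / 3) ^ (-s) := by
    rw [Real.div_rpow (by positivity) (by norm_num), Real.rpow_neg (by norm_num : (0 : ℝ) ≤ 3),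
      div_inv_eq_mul]
  rw [mul_comm, hbound]
  refine discAvg_le_of_forall_le (fun u => Real.rpow_nonneg (norm_nonneg u) _) hρ fun u hu => ?_
  rw [mem_ball, dist_eq_norm] at hu
  -- on the disc, `‖u‖ ≥ ‖c‖ - ρ ≥ (ρ + ‖c‖) / 3`
  exact Real.rpow_le_rpow_of_nonpos (by positivity)
    (by linarith [norm_le_norm_add_norm_sub' c u, norm_sub_rev u c]) (by linarith)

lemma discAvg_norm_rpow_neg_le_of_lt_two_mul (hs0 : 0 ≤ s) (hs2 : s < 2) (hρ : 0 < ρ)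
    (hc : ‖c‖ < 2 * ρ) :
    discAvg (fun u => ‖u‖ ^ (-s)) c ρ
      ≤ 9 / Real.pi * (∫ u in ball (0 : ℂ) 1, ‖u‖ ^ (-s)) * (ρ + ‖c‖) ^ (-s) := by
  have hsub : ball c ρ ⊆ ball 0 (3 * ρ) := fun u hu => by
    rw [mem_ball, dist_eq_norm] at hu
    rw [mem_ball_zero_iff]
    linarith [norm_le_norm_add_norm_sub' u c]
  have hK : 0 ≤ ∫ u in ball (0 : ℂ) 1, ‖u‖ ^ (-s) :=
    integral_nonneg fun u => Real.rpow_nonneg (norm_nonneg u) _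
  have hint : ∫ u in ball c ρ, ‖u‖ ^ (-s)
      ≤ (3 * ρ) ^ (-s + 2) * ∫ u in ball (0 : ℂ) 1, ‖u‖ ^ (-s) := by
    rw [← setIntegral_ball_zero_norm_rpow _ (by positivity)]
    exact setIntegral_mono_set (integrableOn_ball_zero_norm_rpow_neg hs2 _)
      (ae_of_all _ fun u => Real.rpow_nonneg (norm_nonneg u) _) hsub.eventuallyLE
  have hscale : (3 * ρ) ^ (-s + 2) = 9 * ρ ^ 2 * (3 * ρ) ^ (-s) := by
    rw [Real.rpow_add (by positivity), Real.rpow_two]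
    ring
  calc discAvg (fun u => ‖u‖ ^ (-s)) c ρ
      ≤ (Real.pi * ρ ^ 2)⁻¹ * ((3 * ρ) ^ (-s + 2) * ∫ u in ball (0 : ℂ) 1, ‖u‖ ^ (-s)) := by
        rw [discAvg, toReal_volume_ball_complex c hρ.le]
        exact mul_le_mul_of_nonneg_left hint (by positivity)
    _ = 9 / Real.pi * (∫ u in ball (0 : ℂ) 1, ‖u‖ ^ (-s)) * (3 * ρ) ^ (-s) := by
        rw [hscale]
        field_simp
    _ ≤ 9 / Real.pi * (∫ u in ball (0 : ℂ) 1, ‖u‖ ^ (-s)) * (ρ + ‖c‖) ^ (-s) :=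
        mul_le_mul_of_nonneg_left
          (Real.rpow_le_rpow_of_nonpos (by positivity) (by linarith) (by linarith))
          (mul_nonneg (by positivity) hK)

lemma exists_discAvg_norm_rpow_neg_le (hs0 : 0 ≤ s) (hs2 : s < 2) :
    ∃ C, 0 ≤ C ∧ ∀ (c : ℂ) (ρ : ℝ), 0 < ρ →
      discAvg (fun u => ‖u‖ ^ (-s)) c ρ ≤ C * (ρ + ‖c‖) ^ (-s) := by
  set K := ∫ u in ball (0 : ℂ) 1, ‖u‖ ^ (-s)
  refine ⟨max (3 ^ s) (9 / Real.pi * K), by positivity, fun c ρ hρ => ?_⟩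
  rcases le_or_gt (2 * ρ) ‖c‖ with hfar | hnear
  · refine (discAvg_norm_rpow_neg_le_of_two_mul_le hs0 hρ hfar).trans ?_
    gcongr
    exact le_max_left _ _
  · refine (discAvg_norm_rpow_neg_le_of_lt_two_mul hs0 hs2 hρ hnear).trans ?_
    gcongr
    exact le_max_right _ _

end PowerWeights

def IsApWith (p C : ℝ) (w : ℂ → ℝ) : Prop :=
  ∀ (c : ℂ) (r : ℝ), 0 < r →
    discAvg w c r * (discAvg (fun x => w x ^ (1 / (1 - p))) c r) ^ (p - 1) ≤ C

section ApWeights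

variable {p C : ℝ} {w : ℂ → ℝ}

lemma IsApWith.mono (hw : IsApWith p C w) {C' : ℝ} (hC : C ≤ C') : IsApWith p C' w :=
  fun c r hr => (hw c r hr).trans hC

lemma isApWith_const (hp : p ≠ 1) {m : ℝ} (hm : 0 < m) : IsApWith p 1 (fun _ => m) := by
  intro c r hr
  have hexp : 1 / (1 - p) * (p - 1) = -1 := by
    field_simp [sub_ne_zero.mpr (Ne.symm hp)]
    ring
  rw [discAvg_const _ hr, discAvg_const _ hr, ← Real.rpow_mul hm.le, hexp, Real.rpow_neg_one,
    mul_inv_cancel₀ hm.ne']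

lemma exists_isApWith_norm_sub_rpow (hp : 1 < p) {s : ℝ} (hs0 : 0 ≤ s) (hs2 : s < 2) (z : ℂ) :
    ∃ C, IsApWith p C (fun w => ‖w - z‖ ^ (s * (p - 1))) := by
  obtain ⟨C, hC0, hC⟩ := exists_discAvg_norm_rpow_neg_le hs0 hs2
  refine ⟨C ^ (p - 1), fun c ρ hρ => ?_⟩
  have hdual : (fun w : ℂ => (‖w - z‖ ^ (s * (p - 1))) ^ (1 / (1 - p)))
      = fun w => ‖w - z‖ ^ (-s) := by
    funext w
    rw [← Real.rpow_mul (norm_nonneg _)]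
    congr 1
    field_simp [(sub_neg.mpr hp).ne]
    ring
  have hA : discAvg (fun w => ‖w - z‖ ^ (s * (p - 1))) c ρ ≤ (ρ + ‖c - z‖) ^ (s * (p - 1)) :=
    (discAvg_comp_sub_right (fun u => ‖u‖ ^ (s * (p - 1))) z c ρ).trans_le
      (discAvg_norm_rpow_le (by nlinarith) hρ)
  have hB : discAvg (fun w => ‖w - z‖ ^ (-s)) c ρ ≤ C * (ρ + ‖c - z‖) ^ (-s) :=
    (discAvg_comp_sub_right (fun u => ‖u‖ ^ (-s)) z c ρ).trans_le (hC _ ρ hρ)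
  have hB0 : 0 ≤ discAvg (fun w => ‖w - z‖ ^ (-s)) c ρ :=
    discAvg_nonneg fun w => Real.rpow_nonneg (norm_nonneg _) _
  have hd : 0 < ρ + ‖c - z‖ := by positivity
  rw [hdual]
  calc discAvg (fun w => ‖w - z‖ ^ (s * (p - 1))) c ρ
        * discAvg (fun w => ‖w - z‖ ^ (-s)) c ρ ^ (p - 1)
      ≤ (ρ + ‖c - z‖) ^ (s * (p - 1)) * (C * (ρ + ‖c - z‖) ^ (-s)) ^ (p - 1) :=
        mul_le_mul hA (Real.rpow_le_rpow hB0 hB (by linarith)) (by positivity) (by positivity)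
    _ = C ^ (p - 1) := by
        rw [Real.mul_rpow hC0 (by positivity), ← Real.rpow_mul hd.le, mul_left_comm,
          ← Real.rpow_add hd, neg_mul, add_neg_cancel, Real.rpow_zero, mul_one]

end ApWeights

lemma norm_branchCpow_ofReal {w : ℂ} (hw : w ≠ 0) (t : ℝ) : ‖branchCpow w t‖ = ‖w‖ ^ t := by
  rw [branchCpow, Complex.norm_exp, Real.rpow_def_of_pos (norm_pos_iff.mpr hw)]
  simp [Complex.mul_re, mul_comm]

lemma enorm_branchCpow_rpow_mul_ofReal {w : ℂ} (hw : w ≠ 0) (r p : ℝ) :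
    (‖branchCpow w (-(r : ℂ))‖₊ : ℝ≥0∞) ^ p * ENNReal.ofReal (‖w‖ ^ (r * (p - 1)))
      = ENNReal.ofReal (‖w‖ ^ (-r)) := by
  have hpos : 0 < ‖w‖ := norm_pos_iff.mpr hw
  rw [← Complex.ofReal_neg, ← enorm_eq_nnnorm, ← ofReal_norm, norm_branchCpow_ofReal hw,
    ENNReal.ofReal_rpow_of_pos (by positivity), ← Real.rpow_mul hpos.le,
    ← ENNReal.ofReal_mul (by positivity), ← Real.rpow_add hpos]
  ring_nf

lemma setLIntegral_prod_comp_snd {α β : Type*} [MeasurableSpace α] [MeasurableSpace β]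
    {μ : Measure α} {ν : Measure β} [SFinite μ] [SFinite ν] {g : β → ℝ≥0∞} (hg : Measurable g)
    (S : Set α) (T : Set β) :
    ∫⁻ z in S ×ˢ T, g z.2 ∂μ.prod ν = μ S * ∫⁻ y in T, g y ∂ν := by
  rw [← Measure.prod_restrict]
  simpa using lintegral_prod_mul (μ := μ.restrict S) (ν := ν.restrict T)
    (f := fun _ => (1 : ℝ≥0∞)) aemeasurable_const hg.aemeasurable

/-- For `1 < p < ∞` and `2/(1+ε) < r < 2` with `ε > 0`, the function
`f(z) = (z₂−1)^{−r}` (branch `½π < arg(z₂−1) < 3π/2`) belongs to `L^p(△², μ)` where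
`μ(z) = |z₂−1|^{r(p−1)}`, and the weight `μ` belongs to `A_p^*`. -/
theorem kerzman_data_in_weighted_Lp (p ε r : ℝ) (hp1 : 1 < p) (hε : 0 < ε)
    (hr1 : 2 / (1 + ε) < r) (hr2 : r < 2) :
    (∫⁻ z in (Metric.ball (0 : ℂ) 1) ×ˢ (Metric.ball (0 : ℂ) 1),
        (‖branchCpow (z.2 - 1) (-(r : ℂ))‖₊ : ℝ≥0∞) ^ p
          * ENNReal.ofReal (‖z.2 - 1‖ ^ (r * (p - 1)))) < ⊤ ∧
    IsApStar2 p (fun z => ‖z.2 - 1‖ ^ (r * (p - 1))) := by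
  have hr0 : 0 < r := lt_trans (by positivity) hr1
  constructor
  · have hne : ∀ z ∈ ball (0 : ℂ) 1 ×ˢ ball (0 : ℂ) 1, z.2 - 1 ≠ 0 := fun z hz h => by
      simpa [sub_eq_zero.mp h] using hz.2
    rw [setLIntegral_congr_fun (measurableSet_ball.prod measurableSet_ball)
        fun z hz => enorm_branchCpow_rpow_mul_ofReal (hne z hz) r p,
      Measure.volume_eq_prod,
      setLIntegral_prod_comp_snd (g := fun y => ENNReal.ofReal (‖y - 1‖ ^ (-r))) (by fun_prop)]
    exact ENNReal.mul_lt_top measure_ball_lt_top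
      (integrableOn_ball_norm_sub_rpow_neg hr2 1 0 1).lintegral_lt_top
  · obtain ⟨C, hC⟩ := exists_isApWith_norm_sub_rpow hp1 hr0.le hr2 1
    refine ⟨max 1 C, ?_, ae_of_all _ fun _ => hC.mono (le_max_right 1 C)⟩
    filter_upwards [measure_eq_zero_iff_ae_notMem.mp (measure_singleton (1 : ℂ))] with w₂ hw₂
    have hpos : 0 < ‖w₂ - 1‖ := norm_pos_iff.mpr (sub_ne_zero.mpr hw₂)
    exact (isApWith_const hp1.ne' (Real.rpow_pos_of_pos hpos _)).mono (le_max_left 1 C)
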